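/- arXiv:1910.00880 — 2 statements merged into one kernel-verified Lean document; each statement's English description precedes it below -/
import Mathlib

section
/- The function w defined on (-1,1) by w(x) = 1/((cos(arccos(x)/3) - 1/2)√(1 + cos(arccos(x)/3))) + 1/((cos(arccos(x)/3) + 1/2)√(1 - cos(arccos(x)/3))) is an even function: w(-x) = w(x) for all x ∈ (-1,1). -/
/-!
Write `arccos x = 6u`. The double- and triple-angle formulas give
`√(1 + cos 2u) = √2 cos u`, `√(1 - cos 2u) = √2 sin u`, `(cos 2u - 1/2) · 2 cos u = cos 3u` and
`(cos 2u + 1/2) · 2 sin u = sin 3u`, so `w x = √2 / cos (arccos x / 2) + √2 / sin (arccos x / 2)`.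
Since `arccos (-x) = π - arccos x`, replacing `x` by `-x` swaps the two summands.
-/

open Real

noncomputable def w (x : ℝ) : ℝ :=
  1 / ((Real.cos (Real.arccos x / 3) - 1 / 2) * Real.sqrt (1 + Real.cos (Real.arccos x / 3))) +
  1 / ((Real.cos (Real.arccos x / 3) + 1 / 2) * Real.sqrt (1 - Real.cos (Real.arccos x / 3)))

namespace Real

lemma sqrt_one_add_cos_two_mul {u : ℝ} (hu : 0 ≤ cos u) :
    √(1 + cos (2 * u)) = √2 * cos u := by
  rw [cos_two_mul, show 1 + (2 * cos u ^ 2 - 1) = (√2 * cos u) ^ 2 by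
    rw [mul_pow, sq_sqrt zero_le_two]; ring]
  exact sqrt_sq (by positivity)

lemma sqrt_one_sub_cos_two_mul {u : ℝ} (hu : 0 ≤ sin u) :
    √(1 - cos (2 * u)) = √2 * sin u := by
  rw [cos_two_mul, show 1 - (2 * cos u ^ 2 - 1) = (√2 * sin u) ^ 2 by
    rw [mul_pow, sq_sqrt zero_le_two, ← sin_sq_add_cos_sq u]; ring]
  exact sqrt_sq (by positivity)

lemma cos_two_mul_sub_half_mul_two_mul_cos (u : ℝ) :
    (cos (2 * u) - 1 / 2) * (2 * cos u) = cos (3 * u) := by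
  rw [cos_two_mul, cos_three_mul]; ring

lemma cos_two_mul_add_half_mul_two_mul_sin (u : ℝ) :
    (cos (2 * u) + 1 / 2) * (2 * sin u) = sin (3 * u) := by
  rw [cos_two_mul, sin_three_mul]
  linear_combination 4 * sin u * sin_sq_add_cos_sq u

end Real

lemma one_div_mul_sqrt_two_mul {a b c : ℝ} (h : a * (2 * b) = c) :
    1 / (a * (√2 * b)) = √2 / c := by
  have hc : c = √2 * (a * (√2 * b)) := by
    rw [← h]; linear_combination (-(a * b)) * mul_self_sqrt zero_le_two
  rw [hc, div_mul_cancel_left₀ (sqrt_ne_zero'.2 two_pos), one_div]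

/-- At `arccos x ∈ {0, π}` a summand on each side is `1 / 0 = 0`, so this holds for every real `x`. -/
lemma w_eq (x : ℝ) : w x = √2 / cos (arccos x / 2) + √2 / sin (arccos x / 2) := by
  set u := arccos x / 6
  have hu0 : 0 ≤ u := div_nonneg (arccos_nonneg x) (by norm_num)
  have huπ : u ≤ π / 6 := div_le_div_of_nonneg_right (arccos_le_pi x) (by norm_num)
  have hcos : 0 ≤ cos u := cos_nonneg_of_mem_Icc ⟨by linarith [pi_pos], by linarith [pi_pos]⟩
  have hsin : 0 ≤ sin u := sin_nonneg_of_nonneg_of_le_pi hu0 (by linarith [pi_pos])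
  rw [w, show arccos x / 3 = 2 * u by ring, show arccos x / 2 = 3 * u by ring,
    sqrt_one_add_cos_two_mul hcos, sqrt_one_sub_cos_two_mul hsin,
    one_div_mul_sqrt_two_mul (cos_two_mul_sub_half_mul_two_mul_cos u),
    one_div_mul_sqrt_two_mul (cos_two_mul_add_half_mul_two_mul_sin u)]

theorem w_even_general (x : ℝ) : w (-x) = w x := by
  rw [w_eq, w_eq, arccos_neg, show (π - arccos x) / 2 = π / 2 - arccos x / 2 by ring,
    cos_pi_div_two_sub, sin_pi_div_two_sub, add_comm]

theorem w_even (x : ℝ) (hx : x ∈ Set.Ioo (-1 : ℝ) 1) : w (-x) = w x :=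
  w_even_general x
end

section
/- Under the same hypotheses, for all n ≥ 0: Û₂(x)·P_{3n+2}(x) = x·Q_{n+1}(T̂₃(x)) + (1/4)γ_{3n+1}·Qₙ(T̂₃(x)), where Û₂(x) = x² − 1/4 and T̂₃(x) = x³ − (3/4)x. -/
/-!
Induction on `n`, proving simultaneously the companion identity
`Û₂(x) P_{3n+1}(x) = Q_{n+1}(T̂₃ x) + γ_{3n+1} x Qₙ(T̂₃ x)`.
Three steps of the `P`-recursion (using `γ_{3n+2} = 1/4` and `γ_{3n+3} + γ_{3n+4} = 1/2`)
match one step of the `Q`-recursion at `T̂₃ x`.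
-/

section ChebyshevDecomposition

variable {γ : ℕ → ℂ} {P Q : ℕ → ℂ → ℂ}

theorem P_three_mul_add_three (hγ2 : ∀ n : ℕ, γ (3 * n + 2) = 1 / 4)
    (hPrec : ∀ n : ℕ, ∀ x, P (n + 2) x = x * P (n + 1) x - γ (n + 1) * P n x) (n : ℕ) (x : ℂ) :
    P (3 * n + 3) x = x * P (3 * n + 2) x - 1 / 4 * P (3 * n + 1) x := by
  rw [← hγ2 n]
  exact hPrec (3 * n + 1) x

theorem U2_mul_P_three_mul_add_four (hsum : ∀ n : ℕ, γ (3 * n) + γ (3 * n + 1) = 1 / 2)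
    (hγ2 : ∀ n : ℕ, γ (3 * n + 2) = 1 / 4)
    (hPrec : ∀ n : ℕ, ∀ x, P (n + 2) x = x * P (n + 1) x - γ (n + 1) * P n x)
    (hQrec : ∀ n : ℕ, ∀ x,
      Q (n + 2) x = x * Q (n + 1) x - (1 / 4) * γ (3 * n + 1) * γ (3 * n + 3) * Q n x)
    (n : ℕ) (x : ℂ)
    (hA : (x ^ 2 - 1 / 4) * P (3 * n + 2) x =
      x * Q (n + 1) (x ^ 3 - 3 / 4 * x) + 1 / 4 * γ (3 * n + 1) * Q n (x ^ 3 - 3 / 4 * x))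
    (hB : (x ^ 2 - 1 / 4) * P (3 * n + 1) x =
      Q (n + 1) (x ^ 3 - 3 / 4 * x) + γ (3 * n + 1) * x * Q n (x ^ 3 - 3 / 4 * x)) :
    (x ^ 2 - 1 / 4) * P (3 * n + 4) x =
      Q (n + 2) (x ^ 3 - 3 / 4 * x) + γ (3 * n + 4) * x * Q (n + 1) (x ^ 3 - 3 / 4 * x) := by
  have hγ3 : γ (3 * n + 3) = 1 / 2 - γ (3 * n + 4) := eq_sub_of_add_eq (hsum (n + 1))
  rw [hPrec (3 * n + 2), P_three_mul_add_three hγ2 hPrec, hQrec, hγ3]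
  linear_combination (x ^ 2 - 1 / 2 + γ (3 * n + 4)) * hA - x / 4 * hB

theorem U2_mul_P_three_mul_add_five (hγ2 : ∀ n : ℕ, γ (3 * n + 2) = 1 / 4)
    (hPrec : ∀ n : ℕ, ∀ x, P (n + 2) x = x * P (n + 1) x - γ (n + 1) * P n x)
    (n : ℕ) (x : ℂ)
    (hA : (x ^ 2 - 1 / 4) * P (3 * n + 2) x =
      x * Q (n + 1) (x ^ 3 - 3 / 4 * x) + 1 / 4 * γ (3 * n + 1) * Q n (x ^ 3 - 3 / 4 * x))
    (hB : (x ^ 2 - 1 / 4) * P (3 * n + 1) x =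
      Q (n + 1) (x ^ 3 - 3 / 4 * x) + γ (3 * n + 1) * x * Q n (x ^ 3 - 3 / 4 * x))
    (hB' : (x ^ 2 - 1 / 4) * P (3 * n + 4) x =
      Q (n + 2) (x ^ 3 - 3 / 4 * x) + γ (3 * n + 4) * x * Q (n + 1) (x ^ 3 - 3 / 4 * x)) :
    (x ^ 2 - 1 / 4) * P (3 * n + 5) x =
      x * Q (n + 2) (x ^ 3 - 3 / 4 * x) + 1 / 4 * γ (3 * n + 4) * Q (n + 1) (x ^ 3 - 3 / 4 * x) := by
  rw [hPrec (3 * n + 3), P_three_mul_add_three hγ2 hPrec]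
  linear_combination x * hB' - γ (3 * n + 4) * x * hA + γ (3 * n + 4) / 4 * hB

theorem U2_mul_P_three_mul_add_two_and_one (hγ0 : γ 0 = 0)
    (hsum : ∀ n : ℕ, γ (3 * n) + γ (3 * n + 1) = 1 / 2)
    (hγ2 : ∀ n : ℕ, γ (3 * n + 2) = 1 / 4)
    (hP0 : ∀ x, P 0 x = 1) (hP1 : ∀ x, P 1 x = x)
    (hPrec : ∀ n : ℕ, ∀ x, P (n + 2) x = x * P (n + 1) x - γ (n + 1) * P n x)
    (hQ0 : ∀ x, Q 0 x = 1) (hQ1 : ∀ x, Q 1 x = x)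
    (hQrec : ∀ n : ℕ, ∀ x,
      Q (n + 2) x = x * Q (n + 1) x - (1 / 4) * γ (3 * n + 1) * γ (3 * n + 3) * Q n x)
    (n : ℕ) (x : ℂ) :
    (x ^ 2 - 1 / 4) * P (3 * n + 2) x =
        x * Q (n + 1) (x ^ 3 - 3 / 4 * x) + 1 / 4 * γ (3 * n + 1) * Q n (x ^ 3 - 3 / 4 * x) ∧
      (x ^ 2 - 1 / 4) * P (3 * n + 1) x =
        Q (n + 1) (x ^ 3 - 3 / 4 * x) + γ (3 * n + 1) * x * Q n (x ^ 3 - 3 / 4 * x) := by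
  induction n with
  | zero =>
    have hγ1 : γ 1 = 1 / 2 := by simpa [hγ0] using hsum 0
    refine ⟨?_, ?_⟩
    · rw [hPrec 0, hP0, hP1, hQ1, hQ0, hγ1]
      ring
    · rw [hP1, hQ1, hQ0, hγ1]
      ring
  | succ n ih =>
    obtain ⟨hA, hB⟩ := ih
    have hB' := U2_mul_P_three_mul_add_four hsum hγ2 hPrec hQrec n x hA hB
    exact ⟨U2_mul_P_three_mul_add_five hγ2 hPrec n x hA hB hB', hB'⟩

end ChebyshevDecomposition

theorem P_three_n_two_general (γ : ℕ → ℂ) (P Q : ℕ → ℂ → ℂ)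
    (hγ0 : γ 0 = 0)
    (hsum : ∀ n : ℕ, γ (3 * n) + γ (3 * n + 1) = 1 / 2)
    (hγ2 : ∀ n : ℕ, γ (3 * n + 2) = 1 / 4)
    (hP0 : ∀ x, P 0 x = 1) (hP1 : ∀ x, P 1 x = x)
    (hPrec : ∀ n : ℕ, ∀ x, P (n + 2) x = x * P (n + 1) x - γ (n + 1) * P n x)
    (hQ0 : ∀ x, Q 0 x = 1) (hQ1 : ∀ x, Q 1 x = x)
    (hQrec : ∀ n : ℕ, ∀ x,
      Q (n + 2) x = x * Q (n + 1) x - (1 / 4) * γ (3 * n + 1) * γ (3 * n + 3) * Q n x) :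
    ∀ n : ℕ, ∀ x : ℂ, (x ^ 2 - 1 / 4) * P (3 * n + 2) x =
      x * Q (n + 1) (x ^ 3 - (3 / 4) * x) + (1 / 4) * γ (3 * n + 1) * Q n (x ^ 3 - (3 / 4) * x) :=
  fun n x =>
    (U2_mul_P_three_mul_add_two_and_one hγ0 hsum hγ2 hP0 hP1 hPrec hQ0 hQ1 hQrec n x).1

theorem P_three_n_two (γ : ℕ → ℂ) (P Q : ℕ → ℂ → ℂ)
    (hγ0 : γ 0 = 0) (hγne : ∀ n : ℕ, 1 ≤ n → γ n ≠ 0)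
    (hsum : ∀ n : ℕ, γ (3 * n) + γ (3 * n + 1) = 1 / 2)
    (hγ2 : ∀ n : ℕ, γ (3 * n + 2) = 1 / 4)
    (hP0 : ∀ x, P 0 x = 1) (hP1 : ∀ x, P 1 x = x)
    (hPrec : ∀ n : ℕ, ∀ x, P (n + 2) x = x * P (n + 1) x - γ (n + 1) * P n x)
    (hQ0 : ∀ x, Q 0 x = 1) (hQ1 : ∀ x, Q 1 x = x)
    (hQrec : ∀ n : ℕ, ∀ x,
      Q (n + 2) x = x * Q (n + 1) x - (1 / 4) * γ (3 * n + 1) * γ (3 * n + 3) * Q n x) :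
    ∀ n : ℕ, ∀ x : ℂ, (x ^ 2 - 1 / 4) * P (3 * n + 2) x =
      x * Q (n + 1) (x ^ 3 - (3 / 4) * x) + (1 / 4) * γ (3 * n + 1) * Q n (x ^ 3 - (3 / 4) * x) :=
  P_three_n_two_general γ P Q hγ0 hsum hγ2 hP0 hP1 hPrec hQ0 hQ1 hQrec
end
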